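/- arXiv:1602.06394 — 6 statements merged into one kernel-verified Lean document; each statement's English description precedes it below -/
import Mathlib

section
/- Let ĉ₁, ĉ₂ > 0 and set q = √(ĉ₂/(2ĉ₁)). Define κ : ℝ → ℝ by κ(y) = (1/ĉ₁)·(1 − 2·q·y·exp(−q²y²)·∫₀^{qy} exp(t²) dt). Then for every y ∈ ℝ, the steady-state equation −1 + ĉ₁·κ(y) + ĉ₂·y·(∫₀^{y} κ(η) dη) = 0 holds. -/
open Real MeasureTheory intervalIntegral

/-!
Write `κ(y) = ĉ₁⁻¹ D'(q y)` with Dawson's function `D(x) = exp(-x²) ∫₀ˣ exp(t²) dt`, which solves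
`D' = 1 - 2 x D`. Then `∫₀^y κ = D(q y) / (ĉ₁ q)`, and the steady-state equation reduces to
`D(q y) (ĉ₂ y / (ĉ₁ q) - 2 q y) = 0`, which holds because `ĉ₂ = 2 ĉ₁ q²`.
-/

noncomputable def dawson (x : ℝ) : ℝ :=
  exp (-x ^ 2) * ∫ t in (0 : ℝ)..x, exp (t ^ 2)

theorem hasDerivAt_integral_exp_sq (x : ℝ) :
    HasDerivAt (fun x => ∫ t in (0 : ℝ)..x, exp (t ^ 2)) (exp (x ^ 2)) x :=
  have hcont : Continuous fun t : ℝ => exp (t ^ 2) := by fun_prop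
  integral_hasDerivAt_right (hcont.intervalIntegrable _ _)
    (hcont.stronglyMeasurableAtFilter _ _) hcont.continuousAt

theorem hasDerivAt_dawson (x : ℝ) : HasDerivAt dawson (1 - 2 * x * dawson x) x := by
  have hexp : HasDerivAt (fun x : ℝ => exp (-x ^ 2)) (exp (-x ^ 2) * (-(2 * x))) x := by
    simpa using ((hasDerivAt_pow 2 x).neg).exp
  refine (hexp.mul (hasDerivAt_integral_exp_sq x)).congr_deriv ?_
  rw [dawson, ← exp_add, neg_add_cancel, exp_zero]
  ring

@[fun_prop]
theorem continuous_dawson : Continuous dawson :=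
  continuous_iff_continuousAt.2 fun x => (hasDerivAt_dawson x).continuousAt

@[simp]
theorem dawson_zero : dawson 0 = 0 := by
  simp [dawson]

theorem integral_one_sub_two_mul_dawson (a b : ℝ) :
    ∫ x in a..b, (1 - 2 * x * dawson x) = dawson b - dawson a :=
  integral_eq_sub_of_hasDerivAt (fun x _ => hasDerivAt_dawson x)
    ((by fun_prop : Continuous fun x => 1 - 2 * x * dawson x).intervalIntegrable _ _)

theorem integral_one_sub_two_mul_dawson_comp_mul {q : ℝ} (hq : q ≠ 0) (y : ℝ) :
    ∫ η in (0 : ℝ)..y, (1 - 2 * (q * η) * dawson (q * η)) = dawson (q * y) / q := by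
  rw [integral_comp_mul_left (fun x => 1 - 2 * x * dawson x) hq,
    integral_one_sub_two_mul_dawson, mul_zero, dawson_zero, sub_zero, smul_eq_mul,
    inv_mul_eq_div]

/-- the closed-form curvature function solves the local steady-state
equation `-1 + ĉ₁ κ(y) + ĉ₂ y ∫₀^y κ = 0`. -/
theorem steady_state_closed_form_solution
    (c1 c2 : ℝ) (hc1 : 0 < c1) (hc2 : 0 < c2)
    (q : ℝ) (hq : q = Real.sqrt (c2 / (2 * c1)))
    (κ : ℝ → ℝ)
    (hκ : ∀ y : ℝ, κ y =
      (1 / c1) * (1 - 2 * q * y * Real.exp (-(q ^ 2 * y ^ 2)) *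
        ∫ t in (0:ℝ)..(q * y), Real.exp (t ^ 2))) :
    ∀ y : ℝ, -1 + c1 * κ y + c2 * y * (∫ η in (0:ℝ)..y, κ η) = 0 := by
  intro y
  have hratio : 0 < c2 / (2 * c1) := by positivity
  have hq0 : q ≠ 0 := hq ▸ (sqrt_pos.2 hratio).ne'
  have hc2 : c2 = 2 * c1 * q ^ 2 := by
    rw [hq, sq_sqrt hratio.le]
    field_simp
  have hκ_dawson : κ = fun η => c1⁻¹ * (1 - 2 * (q * η) * dawson (q * η)) := by
    ext η
    rw [hκ, dawson, mul_pow, one_div]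
    ring
  have hintegral : ∫ η in (0 : ℝ)..y, κ η = dawson (q * y) / (c1 * q) := by
    rw [hκ_dawson, intervalIntegral.integral_const_mul,
      integral_one_sub_two_mul_dawson_comp_mul hq0]
    field_simp
  rw [hintegral, hκ_dawson, hc2]
  field_simp
  ring
end

section
/- Let ĉ₁, ĉ₂ > 0, set q = √(ĉ₂/(2ĉ₁)), and let δ > 0. If γ : [0, δ) → ℝ is differentiable with γ(0) = π/2 and satisfies −1 − ĉ₁·γ'(y)·sin(γ(y)) + ĉ₂·y·cos(γ(y)) = 0 for all y ∈ [0, δ), then cos(γ(y)) = (1/ĉ₁)·exp(−q²y²)·∫₀^{y} exp(q²s²) ds for all y ∈ [0, δ). -/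
open Real MeasureTheory intervalIntegral Set

/-! With `u = cos ∘ γ` and `q² = ĉ₂ / (2ĉ₁)` the equation becomes the linear equation
`u' = 1/ĉ₁ - 2q² y u` with `u 0 = 0`. Multiplying by the integrating factor
`exp (q² y²)` gives `(u · exp (q² y²))' = exp (q² y²) / ĉ₁`, and both sides vanish at `0`. -/

theorem HasDerivWithinAt.Ici_of_Ico {E : Type*} [NormedAddCommGroup E] [NormedSpace ℝ E]
    {f : ℝ → E} {f' : E} {a b x : ℝ} (h : HasDerivWithinAt f f' (Ico a b) x)
    (hx : x ∈ Ico a b) : HasDerivWithinAt f f' (Ici x) x :=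
  h.mono_of_mem_nhdsWithin <|
    Filter.mem_of_superset (Ico_mem_nhdsGE hx.2) (Ico_subset_Ico_left hx.1)

theorem eq_exp_neg_sq_mul_integral_of_hasDerivWithinAt {k c δ : ℝ} {u u' : ℝ → ℝ}
    (hu : ∀ y ∈ Ico 0 δ, HasDerivWithinAt u (u' y) (Ico 0 δ) y)
    (hode : ∀ y ∈ Ico 0 δ, u' y = c - 2 * k * y * u y) (h0 : u 0 = 0) :
    ∀ y ∈ Ico 0 δ, u y = c * exp (-(k * y ^ 2)) * ∫ s in (0:ℝ)..y, exp (k * s ^ 2) := by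
  intro y hy
  have hexp : ∀ x, HasDerivAt (fun t => exp (k * t ^ 2)) (exp (k * x ^ 2) * (2 * k * x)) x :=
    fun x => by simpa [mul_comm, mul_left_comm, mul_assoc] using
      ((hasDerivAt_pow 2 x).const_mul k).exp
  have hint : ∀ x, HasDerivAt (fun t => ∫ s in (0:ℝ)..t, exp (k * s ^ 2)) (exp (k * x ^ 2)) x :=
    fun x => (Continuous.integral_hasStrictDerivAt (by fun_prop) 0 x).hasDerivAt
  have hsub : Icc 0 y ⊆ Ico 0 δ := Icc_subset_Ico_right hy.2
  have hucont : ContinuousOn u (Icc 0 y) :=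
    fun x hx => ((hu x (hsub hx)).continuousWithinAt).mono hsub
  have hscaled : u y * exp (k * y ^ 2) = c * ∫ s in (0:ℝ)..y, exp (k * s ^ 2) := by
    refine eq_of_has_deriv_right_eq (f := fun t => u t * exp (k * t ^ 2))
      (f' := fun x => c * exp (k * x ^ 2)) (fun x hx => ?_)
      (fun x _ => ((hint x).const_mul c).hasDerivWithinAt)
      (hucont.mul (by fun_prop))
      (fun x _ => ((hint x).const_mul c).continuousAt.continuousWithinAt)
      (by simp [h0]) y (right_mem_Icc.2 hy.1)
    have hxδ : x ∈ Ico 0 δ := hsub (Ico_subset_Icc_self hx)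
    refine (((hu x hxδ).mul (hexp x).hasDerivWithinAt).Ici_of_Ico hxδ).congr_deriv ?_
    rw [hode x hxδ]
    ring
  rw [exp_neg, mul_right_comm, ← hscaled]
  field_simp

theorem local_equation_cos_gamma_closed_form_general
    (c1 c2 q δ : ℝ) (hc1 : 0 < c1) (hc2 : 0 < c2)
    (hq : q = Real.sqrt (c2 / (2 * c1)))
    (γ γ' : ℝ → ℝ)
    (hdiff : ∀ y ∈ Set.Ico (0:ℝ) δ, HasDerivWithinAt γ (γ' y) (Set.Ico (0:ℝ) δ) y)
    (h0 : γ 0 = Real.pi / 2)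
    (hode : ∀ y ∈ Set.Ico (0:ℝ) δ,
      -1 - c1 * γ' y * Real.sin (γ y) + c2 * y * Real.cos (γ y) = 0) :
    ∀ y ∈ Set.Ico (0:ℝ) δ,
      Real.cos (γ y) =
        (1 / c1) * Real.exp (-(q ^ 2 * y ^ 2)) * ∫ s in (0:ℝ)..y, Real.exp (q ^ 2 * s ^ 2) := by
  have hq2 : q ^ 2 = c2 / (2 * c1) := by
    rw [hq, sq_sqrt (by positivity)]
  refine eq_exp_neg_sq_mul_integral_of_hasDerivWithinAt (u := fun y => cos (γ y))
    (fun y hy => (hdiff y hy).cos) (fun y hy => ?_) (by simp [h0])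
  rw [hq2]
  field_simp
  linarith [hode y hy]

/-- the solution of the local steady-state equation
`-1 - ĉ₁ γ'(y) sin γ(y) + ĉ₂ y cos γ(y) = 0` on `[0, δ)` with `γ(0) = π/2`
has `cos (γ(y))` given by the closed-form expression. -/
theorem local_equation_cos_gamma_closed_form
    (c1 c2 q δ : ℝ) (hc1 : 0 < c1) (hc2 : 0 < c2)
    (hq : q = Real.sqrt (c2 / (2 * c1))) (hδ : 0 < δ)
    (γ γ' : ℝ → ℝ)
    (hdiff : ∀ y ∈ Set.Ico (0:ℝ) δ, HasDerivWithinAt γ (γ' y) (Set.Ico (0:ℝ) δ) y)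
    (h0 : γ 0 = Real.pi / 2)
    (hode : ∀ y ∈ Set.Ico (0:ℝ) δ,
      -1 - c1 * γ' y * Real.sin (γ y) + c2 * y * Real.cos (γ y) = 0) :
    ∀ y ∈ Set.Ico (0:ℝ) δ,
      Real.cos (γ y) =
        (1 / c1) * Real.exp (-(q ^ 2 * y ^ 2)) * ∫ s in (0:ℝ)..y, Real.exp (q ^ 2 * s ^ 2) :=
  local_equation_cos_gamma_closed_form_general c1 c2 q δ hc1 hc2 hq γ γ' hdiff h0 hode
end

section
/- Let F(u) = ∫₀^{u} exp(t²) dt and f(u) = 1 − 2·u·exp(−u²)·F(u). Then there exists exactly one u₀ > 0 such that f(u₀) = 0; moreover f(u) > 0 for 0 ≤ u < u₀ and f(u) < 0 for u > u₀. Consequently, for ĉ₁ > 0 and q > 0 the function κ(y) = (1/ĉ₁)·f(q·y) has exactly one zero y₀ > 0, namely y₀ = u₀/q, which depends only on q and not on ĉ₁. -/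
open Real MeasureTheory intervalIntegral

/-- `F(u) = ∫₀^u exp(t²) dt`. -/
noncomputable def Ferf (u : ℝ) : ℝ := ∫ t in (0:ℝ)..u, Real.exp (t ^ 2)

/-- `f(u) = 1 - 2 u exp(-u²) F(u)`, the rescaled curvature function. -/
noncomputable def fker (u : ℝ) : ℝ := 1 - 2 * u * Real.exp (-(u ^ 2)) * Ferf u

/-!
Multiplying by `exp(u²)` turns `f` into `G(u) = exp(u²) - 2 u F(u)`, whose derivative is
`-2 F(u)`: the `exp(u²)` terms cancel. Hence `G` is strictly decreasing on `[0, ∞)`, and it goes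
from `G(0) = 1` to `G(2) ≤ e - 4 < 0`, because `F ≥ 1` on `[1, ∞)` makes `G' ≤ -2` there.
So `G`, and with it `f`, has exactly one positive zero `u₀`, positive before it and negative
after it.
-/

lemma continuous_exp_sq : Continuous fun t : ℝ => Real.exp (t ^ 2) := by fun_prop

lemma Ferf_hasDerivAt (u : ℝ) : HasDerivAt Ferf (Real.exp (u ^ 2)) u :=
  integral_hasDerivAt_right (continuous_exp_sq.intervalIntegrable 0 u)
    continuous_exp_sq.aestronglyMeasurable.stronglyMeasurableAtFilter
    continuous_exp_sq.continuousAt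

lemma Ferf_zero : Ferf 0 = 0 := integral_same

lemma self_le_Ferf {u : ℝ} (hu : 0 ≤ u) : u ≤ Ferf u := by
  calc u = ∫ _ in (0:ℝ)..u, (1 : ℝ) := by simp
    _ ≤ Ferf u := integral_mono_on hu intervalIntegrable_const
        (continuous_exp_sq.intervalIntegrable 0 u) fun t _ => one_le_exp (sq_nonneg t)

noncomputable def Gker (u : ℝ) : ℝ := Real.exp (u ^ 2) - 2 * u * Ferf u

lemma fker_eq_exp_mul_Gker (u : ℝ) : fker u = Real.exp (-(u ^ 2)) * Gker u := by
  have h : Real.exp (-(u ^ 2)) * Real.exp (u ^ 2) = 1 := by rw [← Real.exp_add]; simp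
  unfold fker Gker
  linear_combination -h

lemma Gker_hasDerivAt (u : ℝ) : HasDerivAt Gker (-(2 * Ferf u)) u := by
  have hexp : HasDerivAt (fun u : ℝ => Real.exp (u ^ 2)) (Real.exp (u ^ 2) * (2 * u)) u := by
    simpa using (hasDerivAt_pow 2 u).exp
  exact (hexp.sub (((hasDerivAt_id u).const_mul 2).mul (Ferf_hasDerivAt u))).congr_deriv
    (by simp only [id]; ring)

lemma continuous_Gker : Continuous Gker :=
  continuous_iff_continuousAt.2 fun u => (Gker_hasDerivAt u).continuousAt

lemma Gker_strictAntiOn : StrictAntiOn Gker (Set.Ici 0) := by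
  refine strictAntiOn_of_deriv_neg (convex_Ici 0) continuous_Gker.continuousOn fun u hu => ?_
  rw [interior_Ici, Set.mem_Ioi] at hu
  rw [(Gker_hasDerivAt u).deriv]
  linarith [self_le_Ferf hu.le]

lemma Gker_zero : Gker 0 = 1 := by simp [Gker, Ferf_zero]

lemma Gker_two_neg : Gker 2 < 0 := by
  have hdrop : Gker 2 - Gker 1 ≤ -2 * (2 - 1) := by
    refine (convex_Ici 1).image_sub_le_mul_sub_of_deriv_le continuous_Gker.continuousOn
      (fun u _ => (Gker_hasDerivAt u).differentiableAt.differentiableWithinAt)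
      (fun u hu => ?_) 1 Set.self_mem_Ici 2 (by norm_num) (by norm_num)
    rw [interior_Ici, Set.mem_Ioi] at hu
    rw [(Gker_hasDerivAt u).deriv]
    linarith [self_le_Ferf (zero_le_one.trans hu.le)]
  have hG1 : Gker 1 ≤ Real.exp 1 - 2 := by
    simp only [Gker, one_pow]
    linarith [self_le_Ferf zero_le_one]
  linarith [Real.exp_one_lt_d9]

lemma exists_pos_fker_eq_zero : ∃ u₀, 0 < u₀ ∧ fker u₀ = 0 := by
  obtain ⟨u₀, hu₀, hG⟩ := intermediate_value_Ioo' (by norm_num : (0:ℝ) ≤ 2)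
    continuous_Gker.continuousOn ⟨Gker_two_neg, by rw [Gker_zero]; norm_num⟩
  exact ⟨u₀, hu₀.1, by rw [fker_eq_exp_mul_Gker, hG, mul_zero]⟩

lemma fker_eq_zero_iff {u : ℝ} : fker u = 0 ↔ Gker u = 0 := by
  rw [fker_eq_exp_mul_Gker, mul_eq_zero, or_iff_right (Real.exp_ne_zero _)]

lemma fker_pos_of_lt {u₀ u : ℝ} (hu₀ : fker u₀ = 0) (hu : 0 ≤ u) (h : u < u₀) : 0 < fker u := by
  rw [fker_eq_zero_iff] at hu₀
  rw [fker_eq_exp_mul_Gker]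
  exact mul_pos (Real.exp_pos _) (hu₀ ▸ Gker_strictAntiOn hu (hu.trans h.le) h)

lemma fker_neg_of_lt {u₀ u : ℝ} (hu₀ : fker u₀ = 0) (h₀ : 0 ≤ u₀) (h : u₀ < u) : fker u < 0 := by
  rw [fker_eq_zero_iff] at hu₀
  rw [fker_eq_exp_mul_Gker]
  exact mul_neg_of_pos_of_neg (Real.exp_pos _) (hu₀ ▸ Gker_strictAntiOn h₀ (h₀.trans h.le) h)

lemma eq_of_fker_eq_zero {u v : ℝ} (hu : 0 ≤ u) (hv : 0 ≤ v) (hfu : fker u = 0)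
    (hfv : fker v = 0) : u = v := by
  rw [fker_eq_zero_iff] at hfu hfv
  exact Gker_strictAntiOn.injOn hu hv (hfu.trans hfv.symm)

/-- `f` has exactly one zero `u₀ > 0`, with `f > 0` on `[0, u₀)` and
`f < 0` on `(u₀, ∞)`; consequently `κ(y) = (1/ĉ₁) f(q y)` has exactly one positive
zero, namely `y₀ = u₀ / q`, which depends only on `q` and not on `ĉ₁`. -/
theorem fker_unique_zero :
    (∃! u₀ : ℝ, 0 < u₀ ∧ fker u₀ = 0) ∧
    ∀ u₀ : ℝ, 0 < u₀ → fker u₀ = 0 →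
      (∀ u : ℝ, 0 ≤ u → u < u₀ → 0 < fker u) ∧
      (∀ u : ℝ, u₀ < u → fker u < 0) ∧
      (∀ c1 q : ℝ, 0 < c1 → 0 < q →
        ∀ y : ℝ, 0 < y → ((1 / c1) * fker (q * y) = 0 ↔ y = u₀ / q)) := by
  obtain ⟨u₀, hu₀, hfu₀⟩ := exists_pos_fker_eq_zero
  refine ⟨⟨u₀, ⟨hu₀, hfu₀⟩, fun u hu => eq_of_fker_eq_zero hu.1.le hu₀.le hu.2 hfu₀⟩,
    fun v hv hfv => ⟨fun u => fker_pos_of_lt hfv, fun u => fker_neg_of_lt hfv hv.le,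
      fun c1 q hc1 hq y hy => ?_⟩⟩
  rw [mul_eq_zero, or_iff_right (one_div_ne_zero hc1.ne'), eq_div_iff hq.ne', mul_comm y q]
  exact ⟨fun h => eq_of_fker_eq_zero (mul_pos hq hy).le hv.le h hfv, fun h => h ▸ hfv⟩
end

section
/- Let F(u) = ∫₀^{u} exp(t²) dt, f(u) = 1 − 2·u·exp(−u²)·F(u), let u₀ be the unique zero of f in (0, ∞), fix q > 0, and define h(y) = ∫₀^{y} f(q·η) dη and ĉ₁,crit = (1/q)·∫₀^{u₀} f(u) du. Then for every ĉ₁ with 0 < ĉ₁ < ĉ₁,crit there exists a unique ȳ ∈ (0, u₀/q) with h(ȳ) = ĉ₁, i.e. a unique height at which ∫₀^{ȳ} κ(η) dη = 1 with κ(y) = (1/ĉ₁)·f(q·y). -/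
open Real MeasureTheory intervalIntegral Set

lemma continuous_Ferf : Continuous Ferf := by
  apply intervalIntegral.continuous_primitive
  intro a b
  exact (Real.continuous_exp.comp (continuous_pow 2)).intervalIntegrable a b

lemma continuous_fker : Continuous fker := by
  unfold fker
  exact continuous_const.sub ((continuous_const.mul continuous_id).mul
    ((continuous_pow 2).neg.rexp) |>.mul continuous_Ferf)

lemma fker_zero : fker 0 = 1 := by
  simp [fker, Ferf]

lemma fker_pos_of_lt_s10 (u₀ : ℝ) (huniq : ∀ u : ℝ, 0 < u → fker u = 0 → u = u₀)
    {u : ℝ} (h0 : 0 ≤ u) (h1 : u < u₀) : 0 < fker u := by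
  by_contra hle
  push_neg at hle
  have h01 : (0:ℝ) ∈ Set.Icc (fker u) (fker 0) := by
    constructor
    · exact hle
    · rw [fker_zero]; norm_num
  have := intermediate_value_Icc' h0 (continuous_fker.continuousOn) h01
  obtain ⟨z, hz, hz0⟩ := this
  have hzpos : 0 < z := by
    rcases lt_or_eq_of_le hz.1 with h | h
    · exact h
    · exfalso; rw [← h] at hz0; rw [fker_zero] at hz0; norm_num at hz0
  have heq := huniq z hzpos hz0
  have hlt : z < u₀ := lt_of_le_of_lt hz.2 h1
  linarith

/-- with `h(y) = ∫₀^y f(qη) dη` and `ĉ₁,crit = (1/q) ∫₀^{u₀} f`, for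
every `0 < ĉ₁ < ĉ₁,crit` there is a unique `ȳ ∈ (0, u₀/q)` with `h(ȳ) = ĉ₁`, i.e.
a unique height where `∫₀^{ȳ} κ = 1` for `κ(y) = (1/ĉ₁) f(q y)`. -/
theorem unique_horizontal_tangent_height
    (u₀ q : ℝ) (hu₀ : 0 < u₀) (hfu₀ : fker u₀ = 0)
    (huniq : ∀ u : ℝ, 0 < u → fker u = 0 → u = u₀)
    (hq : 0 < q)
    (h : ℝ → ℝ) (hh : ∀ y : ℝ, h y = ∫ η in (0:ℝ)..y, fker (q * η)) :
    ∀ c1 : ℝ, 0 < c1 → c1 < (1 / q) * ∫ u in (0:ℝ)..u₀, fker u →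
      (∃! ybar : ℝ, ybar ∈ Set.Ioo 0 (u₀ / q) ∧ h ybar = c1) ∧
      (∀ ybar ∈ Set.Ioo 0 (u₀ / q), h ybar = c1 →
        (∫ η in (0:ℝ)..ybar, (1 / c1) * fker (q * η)) = 1) := by
  intro c1 hc1 hc1lt
  set g : ℝ → ℝ := fun η => fker (q * η) with hg
  have hgcont : Continuous g := continuous_fker.comp (continuous_const.mul continuous_id)
  have hb : 0 < u₀ / q := div_pos hu₀ hq
  -- h is continuous
  have hhcont : Continuous h := by
    have : Continuous fun y => ∫ η in (0:ℝ)..y, g η :=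
      intervalIntegral.continuous_primitive (fun a b => hgcont.intervalIntegrable a b) 0
    exact this.congr (fun y => (hh y).symm)
  -- h 0 = 0
  have hh0 : h 0 = 0 := by rw [hh]; simp
  -- h (u₀/q) = (1/q) ∫₀^{u₀} fker
  have hhend : h (u₀ / q) = (1 / q) * ∫ u in (0:ℝ)..u₀, fker u := by
    rw [hh, intervalIntegral.integral_comp_mul_left fker (ne_of_gt hq)]
    rw [mul_zero, mul_div_cancel₀ _ (ne_of_gt hq)]
    rw [smul_eq_mul, one_div]
  -- strict monotonicity on Icc 0 (u₀/q)
  have hmono : StrictMonoOn h (Set.Icc 0 (u₀ / q)) := by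
    intro x hx y hy hxy
    have hsub : (∫ η in x..y, g η) = h y - h x := by
      rw [hh, hh]
      rw [← intervalIntegral.integral_interval_sub_left
        (hgcont.intervalIntegrable 0 y) (hgcont.intervalIntegrable 0 x)]
    have hpos : 0 < ∫ η in x..y, g η := by
      apply intervalIntegral_pos_of_pos_on (hgcont.intervalIntegrable x y) _ hxy
      intro t ht
      have ht0 : 0 < t := lt_of_le_of_lt hx.1 ht.1
      have htu : q * t < u₀ := by
        have : t < u₀ / q := lt_of_lt_of_le ht.2 hy.2
        calc q * t < q * (u₀ / q) := by exact mul_lt_mul_of_pos_left this hq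
        _ = u₀ := by field_simp
      exact fker_pos_of_lt_s10 u₀ huniq (le_of_lt (mul_pos hq ht0)) htu
    linarith [hsub ▸ hpos]
  -- existence via IVT
  have hc1mem : c1 ∈ Set.Ioo (h 0) (h (u₀ / q)) := by
    rw [hh0, hhend]; exact ⟨hc1, hc1lt⟩
  have := intermediate_value_Ioo (le_of_lt hb) hhcont.continuousOn hc1mem
  obtain ⟨ybar, hybar, hval⟩ := this
  constructor
  · refine ⟨ybar, ⟨hybar, hval⟩, ?_⟩
    rintro y ⟨hy, hyval⟩
    exact hmono.injOn (Set.mem_Icc_of_Ioo hy) (Set.mem_Icc_of_Ioo hybar)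
      (by rw [hyval, hval])
  · intro y hy hyval
    rw [intervalIntegral.integral_const_mul, ← hh y, hyval]
    field_simp
end

section
/- Let F(u) = ∫₀^{u} exp(t²) dt, f(u) = 1 − 2·u·exp(−u²)·F(u), let u₀ be the unique zero of f in (0, ∞), fix q > 0, define h(y) = ∫₀^{y} f(q·η) dη, ĉ₁,crit = (1/q)·∫₀^{u₀} f(u) du, and for 0 < ĉ₁ < ĉ₁,crit let ȳ(ĉ₁) be the unique y ∈ (0, u₀/q) with h(y) = ĉ₁, and define Ā(ĉ₁) = ∫₀^{ȳ(ĉ₁)} y·h(y)/√(ĉ₁² − h(y)²) dy. Then the map ĉ₁ ↦ ĉ₁/Ā(ĉ₁) is strictly decreasing on (0, ĉ₁,crit); i.e. if 0 < ĉ₁ⁱ < ĉ₁ʲ < ĉ₁,crit then ĉ₁ⁱ/Ā(ĉ₁ⁱ) > ĉ₁ʲ/Ā(ĉ₁ʲ). -/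
/-!
The substitution `s = h(y) / ĉ₁`, i.e. `y = ȳ(ĉ₁ s)`, turns the area into
`Ā(ĉ₁) = ĉ₁ ∫₀¹ G(ĉ₁ s) s / √(1 - s²) ds` with `G(c) = ȳ(c) / f(q ȳ(c))`.
On `[0, u₀)` the function `f` is positive (`f(0) = 1` and `u₀` is its first zero) and decreasing,
so as `ĉ₁` grows `ȳ(ĉ₁)` increases while `f(q ȳ(ĉ₁))` decreases: `G` is strictly increasing, hence
so is the integral, and `ĉ₁ / Ā(ĉ₁)` is its reciprocal.
The singularity at `s = 1` is integrable because `ĉ₁² - h(y)² ≥ ĉ₁ f(q ȳ) (ȳ - y)`.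
-/

open Real MeasureTheory intervalIntegral Set

lemma hasDerivAt_Ferf (u : ℝ) : HasDerivAt Ferf (exp (u ^ 2)) u :=
  ((continuous_exp.comp (continuous_pow 2)).integral_hasStrictDerivAt 0 u).hasDerivAt

lemma Ferf_nonneg {u : ℝ} (hu : 0 ≤ u) : 0 ≤ Ferf u :=
  integral_nonneg hu fun _ _ => (exp_pos _).le

lemma hasDerivAt_fker (u : ℝ) :
    HasDerivAt fker (2 * exp (-(u ^ 2)) * Ferf u * (2 * u ^ 2 - 1) - 2 * u) u := by
  have hexp : HasDerivAt (fun u : ℝ => exp (-(u ^ 2))) (exp (-(u ^ 2)) * -(2 * u)) u := by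
    simpa using ((hasDerivAt_pow 2 u).neg).exp
  have := (hasDerivAt_const u (1 : ℝ)).sub
    ((((hasDerivAt_id u).const_mul 2).mul hexp).mul (hasDerivAt_Ferf u))
  refine this.congr_deriv ?_
  have : exp (-(u ^ 2)) * exp (u ^ 2) = 1 := by rw [← exp_add]; simp
  simp only [id, Pi.mul_apply]
  linear_combination (-(2 * u)) * this

/-- Writing `x = 2 u e^{-u²} F(u) ∈ [0, 1)`, one has `u f'(u) = 2 u² (x - 1) - x < 0`. -/
lemma deriv_fker_neg {u : ℝ} (hu : 0 < u) (hf : 0 < fker u) : deriv fker u < 0 := by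
  rw [(hasDerivAt_fker u).deriv]
  have hx : 0 ≤ exp (-(u ^ 2)) * Ferf u := mul_nonneg (exp_pos _).le (Ferf_nonneg hu.le)
  have hx1 : 2 * u * (exp (-(u ^ 2)) * Ferf u) < 1 := by unfold fker at hf; linarith
  nlinarith [mul_pos hu hu]

lemma fker_pos_of_forall_ne_zero {u₀ : ℝ} (hne : ∀ u ∈ Ioo 0 u₀, fker u ≠ 0) {u : ℝ}
    (hu : u ∈ Ico 0 u₀) : 0 < fker u := by
  have h0 : (0 : ℝ) ∈ Ico 0 u₀ := ⟨le_rfl, hu.1.trans_lt hu.2⟩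
  refine isPreconnected_Ico.lt_of_ne continuous_fker.continuousOn (fun v hv => ?_)
    ⟨0, h0, by simp [fker_zero]⟩ hu
  rcases hv.1.eq_or_lt with rfl | hv0
  · simp [fker_zero]
  · exact hne v ⟨hv0, hv.2⟩

lemma strictAntiOn_fker {u₀ : ℝ} (hpos : ∀ u ∈ Ico 0 u₀, 0 < fker u) :
    StrictAntiOn fker (Ico 0 u₀) :=
  strictAntiOn_of_deriv_neg (convex_Ico 0 u₀) continuous_fker.continuousOn fun u hu => by
    rw [interior_Ico] at hu
    exact deriv_fker_neg hu.1 (hpos u (Ioo_subset_Ico_self hu))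

section AreaIntegral

variable {h h' : ℝ → ℝ} {Y δ : ℝ}

lemma mul_sub_le_sub_of_le_hasDerivAt (hd : ∀ y, HasDerivAt h (h' y) y)
    (hle : ∀ y ∈ Icc 0 Y, δ ≤ h' y) {y z : ℝ} (hy : y ∈ Icc 0 Y) (hz : z ∈ Icc 0 Y)
    (hyz : y ≤ z) : δ * (z - y) ≤ h z - h y :=
  (convex_Icc 0 Y).mul_sub_le_image_sub_of_le_deriv
    (fun x _ => (hd x).continuousAt.continuousWithinAt)
    (fun x _ => (hd x).differentiableAt.differentiableWithinAt)
    (fun x hx => (hd x).deriv ▸ hle x (interior_subset hx)) y hy z hz hyz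

lemma mul_le_of_le_hasDerivAt (hd : ∀ y, HasDerivAt h (h' y) y) (h0 : h 0 = 0)
    (hle : ∀ y ∈ Icc 0 Y, δ ≤ h' y) {y : ℝ} (hy : y ∈ Icc 0 Y) : δ * y ≤ h y := by
  simpa [h0] using
    mul_sub_le_sub_of_le_hasDerivAt hd hle (left_mem_Icc.2 (hy.1.trans hy.2)) hy hy.1

lemma mul_mul_sub_le_sq_sub_sq (hd : ∀ y, HasDerivAt h (h' y) y) (h0 : h 0 = 0) (hδ : 0 < δ)
    (hle : ∀ y ∈ Icc 0 Y, δ ≤ h' y) {y : ℝ} (hy : y ∈ Icc 0 Y) :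
    h Y * δ * (Y - y) ≤ h Y ^ 2 - h y ^ 2 := by
  have hY : Y ∈ Icc 0 Y := right_mem_Icc.2 (hy.1.trans hy.2)
  have hsub := mul_sub_le_sub_of_le_hasDerivAt hd hle hy hY hy.2
  have hhy := mul_le_of_le_hasDerivAt hd h0 hle hy
  have hhY := mul_le_of_le_hasDerivAt hd h0 hle hY
  have hhy0 : 0 ≤ h y := (mul_nonneg hδ.le hy.1).trans hhy
  nlinarith [mul_le_mul_of_nonneg_right hsub (by nlinarith [hy.1, hy.2] : 0 ≤ h Y + h y),
    mul_nonneg (mul_nonneg hδ.le (sub_nonneg.2 hy.2)) hhy0]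

lemma integrableOn_area_integrand (hd : ∀ y, HasDerivAt h (h' y) y) (h0 : h 0 = 0)
    (hδ : 0 < δ) (hle : ∀ y ∈ Icc 0 Y, δ ≤ h' y) (hY : 0 < Y) :
    IntegrableOn (fun y => y * h y / √(h Y ^ 2 - h y ^ 2)) (Ioo 0 Y) := by
  have hhY : 0 < h Y :=
    (mul_pos hδ hY).trans_le (mul_le_of_le_hasDerivAt hd h0 hle ⟨hY.le, le_rfl⟩)
  have hhy : ∀ y ∈ Ioo 0 Y, 0 < h y := fun y hy =>
    (mul_pos hδ hy.1).trans_le (mul_le_of_le_hasDerivAt hd h0 hle (Ioo_subset_Icc_self hy))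
  have hgap : ∀ y ∈ Ioo 0 Y, h Y * δ * (Y - y) ≤ h Y ^ 2 - h y ^ 2 := fun y hy =>
    mul_mul_sub_le_sq_sub_sq hd h0 hδ hle (Ioo_subset_Icc_self hy)
  have hcont : ContinuousOn (fun y => y * h y / √(h Y ^ 2 - h y ^ 2)) (Ioo 0 Y) := by
    have : Continuous h := continuous_iff_continuousAt.2 fun y => (hd y).continuousAt
    refine ContinuousOn.div (by fun_prop) (by fun_prop) fun y hy => (sqrt_pos.2 ?_).ne'
    exact (mul_pos (mul_pos hhY hδ) (sub_pos.2 hy.2)).trans_le (hgap y hy)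
  have hbound : IntegrableOn (fun y => Y * h Y / √(h Y * δ) * (Y - y) ^ (-(1 / 2) : ℝ))
      (Ioo 0 Y) := by
    have := ((intervalIntegrable_rpow' (a := 0) (b := Y) (r := -(1 / 2)) (by norm_num))
      |>.comp_sub_left Y).symm
    simp only [sub_self, sub_zero] at this
    exact (this.1.mono_set Ioo_subset_Ioc_self).const_mul _
  refine hbound.mono' (hcont.aestronglyMeasurable measurableSet_Ioo) ?_
  refine (ae_restrict_iff' measurableSet_Ioo).2 (Filter.Eventually.of_forall fun y hy => ?_)
  have hYy : 0 < Y - y := sub_pos.2 hy.2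
  have hden : √(h Y * δ) * √(Y - y) ≤ √(h Y ^ 2 - h y ^ 2) := by
    rw [← sqrt_mul (by positivity)]
    exact sqrt_le_sqrt (hgap y hy)
  have hnum : y * h y ≤ Y * h Y :=
    mul_le_mul hy.2.le (by nlinarith [mul_pos (mul_pos hhY hδ) hYy, hgap y hy, hhy y hy])
      (hhy y hy).le hY.le
  rw [norm_of_nonneg (div_nonneg (mul_pos hy.1 (hhy y hy)).le (sqrt_nonneg _)), rpow_neg hYy.le,
    ← sqrt_eq_rpow, ← div_eq_mul_inv, div_div]
  exact div_le_div₀ (by positivity) hnum (by positivity) hden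

lemma strictMonoOn_of_le_hasDerivAt (hd : ∀ y, HasDerivAt h (h' y) y) (hδ : 0 < δ)
    (hle : ∀ y ∈ Icc 0 Y, δ ≤ h' y) : StrictMonoOn h (Icc 0 Y) := fun y hy z hz hyz => by
  nlinarith [mul_sub_le_sub_of_le_hasDerivAt hd hle hy hz hyz.le, mul_pos hδ (sub_pos.2 hyz)]

/-- The integrand of `Ā(c) / c` after the substitution `s = h(y) / c`, `y = ȳ(c s)`. -/
noncomputable def areaKernel (h' ybar : ℝ → ℝ) (c s : ℝ) : ℝ :=
  ybar (c * s) / h' (ybar (c * s)) * (s / √(1 - s ^ 2))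

lemma abs_deriv_smul_areaKernel {ybar : ℝ → ℝ} (hinv : ∀ y ∈ Ioo 0 Y, ybar (h y) = y)
    {y : ℝ} (hy : y ∈ Ioo 0 Y) (hh'y : 0 < h' y) (hhy : 0 < h y) (hhyY : h y < h Y) :
    |h' y / h Y| • areaKernel h' ybar (h Y) (h y / h Y) =
      y * h y / √(h Y ^ 2 - h y ^ 2) / h Y := by
  have hhY : 0 < h Y := hhy.trans hhyY
  have hsqrt : √(1 - (h y / h Y) ^ 2) = √(h Y ^ 2 - h y ^ 2) / h Y := by
    rw [show 1 - (h y / h Y) ^ 2 = (h Y ^ 2 - h y ^ 2) / h Y ^ 2 by field_simp,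
      sqrt_div' _ (sq_nonneg _), sqrt_sq hhY.le]
  have hpos : 0 < √(h Y ^ 2 - h y ^ 2) := sqrt_pos.2 (by nlinarith)
  rw [areaKernel, mul_div_cancel₀ _ hhY.ne', hinv y hy, hsqrt, smul_eq_mul,
    abs_of_pos (div_pos hh'y hhY)]
  field_simp

lemma integral_area_integrand_eq (hd : ∀ y, HasDerivAt h (h' y) y) (h0 : h 0 = 0)
    (hδ : 0 < δ) (hle : ∀ y ∈ Icc 0 Y, δ ≤ h' y) (hY : 0 < Y) {ybar : ℝ → ℝ}
    (hinv : ∀ y ∈ Ioo 0 Y, ybar (h y) = y) :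
    IntervalIntegrable (areaKernel h' ybar (h Y)) volume 0 1 ∧
      ∫ y in 0..Y, y * h y / √(h Y ^ 2 - h y ^ 2) =
        h Y * ∫ s in 0..1, areaKernel h' ybar (h Y) s := by
  have hmono := strictMonoOn_of_le_hasDerivAt hd hδ hle
  have hhY : 0 < h Y := h0 ▸ hmono (left_mem_Icc.2 hY.le) (right_mem_Icc.2 hY.le) hY
  have hmono' : StrictMonoOn (fun y => h y / h Y) (Icc 0 Y) := fun y hy z hz hyz =>
    div_lt_div_of_pos_right (hmono hy hz hyz) hhY
  have hder : ∀ y ∈ Ioo 0 Y, HasDerivWithinAt (fun y => h y / h Y) (h' y / h Y) (Ioo 0 Y) y :=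
    fun y _ => ((hd y).div_const _).hasDerivWithinAt
  have hinj : InjOn (fun y => h y / h Y) (Ioo 0 Y) := (hmono'.mono Ioo_subset_Icc_self).injOn
  have himg : (fun y => h y / h Y) '' Ioo 0 Y = Ioo 0 1 := by
    have hcont : ContinuousOn (fun y => h y / h Y) (Icc 0 Y) := fun y _ =>
      ((hd y).continuousAt.div_const _).continuousWithinAt
    simpa [h0, hhY.ne'] using hcont.image_Ioo_of_strictMonoOn hY.le hmono'
  have hpt : EqOn (fun y => |h' y / h Y| • areaKernel h' ybar (h Y) (h y / h Y))
      (fun y => y * h y / √(h Y ^ 2 - h y ^ 2) / h Y) (Ioo 0 Y) := fun y hy => by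
    have hy' := Ioo_subset_Icc_self hy
    exact abs_deriv_smul_areaKernel hinv hy (hδ.trans_le (hle y hy'))
      (h0 ▸ hmono (left_mem_Icc.2 hY.le) hy' hy.1)
      (hmono hy' (right_mem_Icc.2 hY.le) hy.2)
  have hint := integrableOn_image_iff_integrableOn_abs_deriv_smul measurableSet_Ioo hder hinj
    (areaKernel h' ybar (h Y))
  have heq := integral_image_eq_integral_abs_deriv_smul measurableSet_Ioo hder hinj
    (areaKernel h' ybar (h Y))
  rw [himg, integrableOn_congr_fun hpt measurableSet_Ioo] at hint
  rw [himg, setIntegral_congr_fun measurableSet_Ioo hpt, MeasureTheory.integral_div] at heq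
  rw [intervalIntegrable_iff_integrableOn_Ioo_of_le zero_le_one, integral_of_le hY.le,
    integral_of_le zero_le_one, integral_Ioc_eq_integral_Ioo, integral_Ioc_eq_integral_Ioo, heq]
  refine ⟨hint.2 ((integrableOn_area_integrand hd h0 hδ hle hY).div_const _), ?_⟩
  field_simp

end AreaIntegral

section AreaRatio

variable {h h' ybar : ℝ → ℝ} {b C : ℝ}

lemma strictMonoOn_of_hasDerivAt_pos (hd : ∀ y, HasDerivAt h (h' y) y)
    (hpos : ∀ y ∈ Ico 0 b, 0 < h' y) : StrictMonoOn h (Ico 0 b) :=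
  strictMonoOn_of_hasDerivWithinAt_pos (convex_Ico 0 b)
    (fun y _ => (hd y).continuousAt.continuousWithinAt) (fun y _ => (hd y).hasDerivWithinAt)
    fun y hy => hpos y (interior_subset hy)

lemma integral_area_integrand_eq_mul (hd : ∀ y, HasDerivAt h (h' y) y) (h0 : h 0 = 0)
    (hpos : ∀ y ∈ Ico 0 b, 0 < h' y) (hanti : AntitoneOn h' (Ico 0 b))
    (hybar : ∀ c ∈ Ioo 0 C, ybar c ∈ Ioo 0 b ∧ h (ybar c) = c) {c : ℝ} (hc : c ∈ Ioo 0 C) :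
    IntervalIntegrable (areaKernel h' ybar c) volume 0 1 ∧
      ∫ y in 0..ybar c, y * h y / √(c ^ 2 - h y ^ 2) =
        c * ∫ s in 0..1, areaKernel h' ybar c s := by
  obtain ⟨⟨hY0, hYb⟩, hhY⟩ := hybar c hc
  have hsub : Icc 0 (ybar c) ⊆ Ico 0 b := Icc_subset_Ico_right hYb
  have hY : ybar c ∈ Ico 0 b := hsub (right_mem_Icc.2 hY0.le)
  have hmono := strictMonoOn_of_hasDerivAt_pos hd hpos
  have hinv : ∀ y ∈ Ioo 0 (ybar c), ybar (h y) = y := fun y hy => by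
    have hy' : y ∈ Ico 0 b := hsub (Ioo_subset_Icc_self hy)
    have hhy : h y ∈ Ioo 0 C :=
      ⟨h0 ▸ hmono (left_mem_Ico.2 (hy'.1.trans_lt hy'.2)) hy' hy.1,
        ((hmono hy' hY hy.2).trans_eq hhY).trans hc.2⟩
    obtain ⟨hmem, heq⟩ := hybar _ hhy
    exact hmono.injOn (Ioo_subset_Ico_self hmem) hy' heq
  have :=
    integral_area_integrand_eq hd h0 (hpos _ hY) (fun y hy => hanti (hsub hy) hY hy.2) hY0 hinv
  rwa [hhY] at this

lemma strictMonoOn_ybar_div (hd : ∀ y, HasDerivAt h (h' y) y)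
    (hpos : ∀ y ∈ Ico 0 b, 0 < h' y) (hanti : AntitoneOn h' (Ico 0 b))
    (hybar : ∀ c ∈ Ioo 0 C, ybar c ∈ Ioo 0 b ∧ h (ybar c) = c) :
    StrictMonoOn (fun c => ybar c / h' (ybar c)) (Ioo 0 C) := fun c₁ hc₁ c₂ hc₂ hc => by
  obtain ⟨hY₁, hh₁⟩ := hybar c₁ hc₁
  obtain ⟨hY₂, hh₂⟩ := hybar c₂ hc₂
  have hY₁' := Ioo_subset_Ico_self hY₁
  have hY₂' := Ioo_subset_Ico_self hY₂
  have hlt : ybar c₁ < ybar c₂ :=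
    ((strictMonoOn_of_hasDerivAt_pos hd hpos).lt_iff_lt hY₁' hY₂').1 (by rwa [hh₁, hh₂])
  exact div_lt_div₀ hlt (hanti hY₁' hY₂' hlt.le) hY₂.1.le (hpos _ hY₂')

lemma mul_mem_Ioo_of_mem_Ioo_one {c s C : ℝ} (hc : c ∈ Ioo 0 C) (hs : s ∈ Ioo 0 1) :
    c * s ∈ Ioo 0 C :=
  ⟨mul_pos hc.1 hs.1, by nlinarith [hc.1, hc.2, hs.2]⟩

lemma div_sqrt_one_sub_sq_pos {s : ℝ} (hs : s ∈ Ioo 0 1) : 0 < s / √(1 - s ^ 2) :=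
  div_pos hs.1 (sqrt_pos.2 (by nlinarith [hs.1, hs.2]))

lemma areaKernel_pos (hpos : ∀ y ∈ Ico 0 b, 0 < h' y)
    (hybar : ∀ c ∈ Ioo 0 C, ybar c ∈ Ioo 0 b ∧ h (ybar c) = c) {c s : ℝ} (hc : c ∈ Ioo 0 C)
    (hs : s ∈ Ioo 0 1) : 0 < areaKernel h' ybar c s := by
  have hY := (hybar _ (mul_mem_Ioo_of_mem_Ioo_one hc hs)).1
  exact mul_pos (div_pos hY.1 (hpos _ (Ioo_subset_Ico_self hY))) (div_sqrt_one_sub_sq_pos hs)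

lemma areaKernel_lt_areaKernel (hd : ∀ y, HasDerivAt h (h' y) y)
    (hpos : ∀ y ∈ Ico 0 b, 0 < h' y) (hanti : AntitoneOn h' (Ico 0 b))
    (hybar : ∀ c ∈ Ioo 0 C, ybar c ∈ Ioo 0 b ∧ h (ybar c) = c) {c₁ c₂ s : ℝ}
    (hc₁ : c₁ ∈ Ioo 0 C) (hc₂ : c₂ ∈ Ioo 0 C) (hc : c₁ < c₂) (hs : s ∈ Ioo 0 1) :
    areaKernel h' ybar c₁ s < areaKernel h' ybar c₂ s :=
  mul_lt_mul_of_pos_right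
    (strictMonoOn_ybar_div hd hpos hanti hybar (mul_mem_Ioo_of_mem_Ioo_one hc₁ hs)
      (mul_mem_Ioo_of_mem_Ioo_one hc₂ hs) (mul_lt_mul_of_pos_right hc hs.1))
    (div_sqrt_one_sub_sq_pos hs)

theorem strictAntiOn_div_integral_area_integrand (hd : ∀ y, HasDerivAt h (h' y) y)
    (h0 : h 0 = 0) (hpos : ∀ y ∈ Ico 0 b, 0 < h' y) (hanti : AntitoneOn h' (Ico 0 b))
    (hybar : ∀ c ∈ Ioo 0 C, ybar c ∈ Ioo 0 b ∧ h (ybar c) = c) :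
    StrictAntiOn (fun c => c / ∫ y in 0..ybar c, y * h y / √(c ^ 2 - h y ^ 2)) (Ioo 0 C) :=
  fun c₁ hc₁ c₂ hc₂ hc => by
  obtain ⟨hint₁, heq₁⟩ := integral_area_integrand_eq_mul hd h0 hpos hanti hybar hc₁
  obtain ⟨hint₂, heq₂⟩ := integral_area_integrand_eq_mul hd h0 hpos hanti hybar hc₂
  have hI₁ : 0 < ∫ s in 0..1, areaKernel h' ybar c₁ s :=
    intervalIntegral_pos_of_pos_on hint₁ (fun s hs => areaKernel_pos hpos hybar hc₁ hs) one_pos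
  have hI : ∫ s in 0..1, areaKernel h' ybar c₁ s < ∫ s in 0..1, areaKernel h' ybar c₂ s := by
    rw [← sub_pos, ← integral_sub hint₂ hint₁]
    exact intervalIntegral_pos_of_pos_on (hint₂.sub hint₁)
      (fun s hs => sub_pos.2 (areaKernel_lt_areaKernel hd hpos hanti hybar hc₁ hc₂ hc hs))
      one_pos
  simp only [heq₁, heq₂, div_mul_cancel_left₀ hc₁.1.ne', div_mul_cancel_left₀ hc₂.1.ne']
  exact (inv_lt_inv₀ (hI₁.trans hI) hI₁).2 hI

end AreaRatio

theorem c1_over_area_strictly_decreasing_general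
    (u₀ q : ℝ)
    (huniq : ∀ u : ℝ, 0 < u → fker u = 0 → u = u₀)
    (hq : 0 < q)
    (h : ℝ → ℝ) (hh : ∀ y : ℝ, h y = ∫ η in (0:ℝ)..y, fker (q * η))
    (ccrit : ℝ)
    (ybar : ℝ → ℝ)
    (hybar : ∀ c1 ∈ Set.Ioo (0:ℝ) ccrit,
      ybar c1 ∈ Set.Ioo 0 (u₀ / q) ∧ h (ybar c1) = c1)
    (Abar : ℝ → ℝ)
    (hAbar : ∀ c1 ∈ Set.Ioo (0:ℝ) ccrit,
      Abar c1 = ∫ y in (0:ℝ)..(ybar c1), y * h y / Real.sqrt (c1 ^ 2 - (h y) ^ 2)) :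
    ∀ c1i c1j : ℝ, 0 < c1i → c1i < c1j → c1j < ccrit →
      c1j / Abar c1j < c1i / Abar c1i := by
  have hpos : ∀ u ∈ Ico 0 u₀, 0 < fker u :=
    fun u hu => fker_pos_of_forall_ne_zero (fun v hv hfv => hv.2.ne (huniq v hv.1 hfv)) hu
  have hmaps : ∀ y ∈ Ico 0 (u₀ / q), q * y ∈ Ico 0 u₀ :=
    fun y hy => ⟨mul_nonneg hq.le hy.1, (lt_div_iff₀' hq).1 hy.2⟩
  have hanti : AntitoneOn (fun y => fker (q * y)) (Ico 0 (u₀ / q)) := fun y hy z hz hyz =>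
    (strictAntiOn_fker hpos).antitoneOn (hmaps y hy) (hmaps z hz)
      (mul_le_mul_of_nonneg_left hyz hq.le)
  have hd : ∀ y, HasDerivAt h (fker (q * y)) y := fun y => funext hh ▸
    ((continuous_fker.comp (continuous_const_mul q)).integral_hasStrictDerivAt 0 y).hasDerivAt
  have h0 : h 0 = 0 := by rw [hh, integral_same]
  intro ci cj hi hij hj
  have hci : ci ∈ Ioo 0 ccrit := ⟨hi, hij.trans hj⟩
  have hcj : cj ∈ Ioo 0 ccrit := ⟨hi.trans hij, hj⟩
  rw [hAbar ci hci, hAbar cj hcj]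
  exact strictAntiOn_div_integral_area_integrand hd h0 (fun y hy => hpos _ (hmaps y hy)) hanti
    hybar hci hcj hij

/-- with `h(y) = ∫₀^y f(qη) dη`, `ĉ₁,crit = (1/q) ∫₀^{u₀} f`,
`ȳ(ĉ₁)` the unique point of `(0, u₀/q)` with `h(ȳ) = ĉ₁`, and
`Ā(ĉ₁) = ∫₀^{ȳ(ĉ₁)} y h(y)/√(ĉ₁² - h(y)²) dy`, the map `ĉ₁ ↦ ĉ₁/Ā(ĉ₁)` is
strictly decreasing on `(0, ĉ₁,crit)`. -/
theorem c1_over_area_strictly_decreasing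
    (u₀ q : ℝ) (hu₀ : 0 < u₀) (hfu₀ : fker u₀ = 0)
    (huniq : ∀ u : ℝ, 0 < u → fker u = 0 → u = u₀)
    (hq : 0 < q)
    (h : ℝ → ℝ) (hh : ∀ y : ℝ, h y = ∫ η in (0:ℝ)..y, fker (q * η))
    (ccrit : ℝ) (hccrit : ccrit = (1 / q) * ∫ u in (0:ℝ)..u₀, fker u)
    (ybar : ℝ → ℝ)
    (hybar : ∀ c1 ∈ Set.Ioo (0:ℝ) ccrit,
      ybar c1 ∈ Set.Ioo 0 (u₀ / q) ∧ h (ybar c1) = c1)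
    (Abar : ℝ → ℝ)
    (hAbar : ∀ c1 ∈ Set.Ioo (0:ℝ) ccrit,
      Abar c1 = ∫ y in (0:ℝ)..(ybar c1), y * h y / Real.sqrt (c1 ^ 2 - (h y) ^ 2)) :
    ∀ c1i c1j : ℝ, 0 < c1i → c1i < c1j → c1j < ccrit →
      c1j / Abar c1j < c1i / Abar c1i :=
  c1_over_area_strictly_decreasing_general u₀ q huniq hq h hh ccrit ybar hybar Abar hAbar
end

section
/- Let a > b > 0 and define E : [0, π/2] → ℝ by E(φ) = −1 + c₁·π·a²b²/(a²·sin²φ + b²·cos²φ)^{3/2} + c₂·π·a²b²·sin²φ/√(a²·sin²φ + b²·cos²φ). Then there exist no real numbers c₁, c₂ such that E(φ) = 0 for all φ ∈ [0, π/2]. In other words, among ellipses with semi-axes a ≥ b > 0, only circles (a = b) can satisfy the steady-state equation, and circles satisfy it exactly when c₂ = 0 and c₁ = 1/(aπ)·(1/a)·a = b/(a²π) with a = b. -/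
/-!
Writing `K = c₁πa²b²` and `L = c₂πa²b²`, the equation at the vertices `φ = 0` and `φ = π/2`
forces `K = b³` and `L = (a³ - b³)/a²`. At `φ = π/4` the radius of curvature involves the
quadratic mean `s = √((a² + b²)/2)`, and the equation becomes `2a²s³ = 2a²b³ + (a³ - b³)s²`;
but `2s ≥ a + b` makes the left side exceed the right one by at least `b(a² - b²)²/2 > 0`.
-/

open Real Set

/-- Left-hand side of the steady-state equation evaluated along the ellipse
`x = a cos φ`, `y = b sin φ` (area `A = abπ`, curvature
`κ(φ) = ab/(a² sin²φ + b² cos²φ)^{3/2}`, height `y = b sin φ`,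
`cos γ = a sin φ / √(a² sin²φ + b² cos²φ)`). -/
noncomputable def ellipseE (a b c1 c2 φ : ℝ) : ℝ :=
  -1 + c1 * Real.pi * a ^ 2 * b ^ 2 /
      (Real.sqrt (a ^ 2 * Real.sin φ ^ 2 + b ^ 2 * Real.cos φ ^ 2)) ^ 3
    + c2 * Real.pi * a ^ 2 * b ^ 2 * Real.sin φ ^ 2 /
      Real.sqrt (a ^ 2 * Real.sin φ ^ 2 + b ^ 2 * Real.cos φ ^ 2)

theorem ellipseE_zero (a c1 c2 : ℝ) {b : ℝ} (hb : 0 ≤ b) :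
    ellipseE a b c1 c2 0 = -1 + c1 * π * a ^ 2 * b ^ 2 / b ^ 3 := by
  simp [ellipseE, sqrt_sq hb]

theorem ellipseE_pi_div_two (b c1 c2 : ℝ) {a : ℝ} (ha : 0 ≤ a) :
    ellipseE a b c1 c2 (π / 2) =
      -1 + c1 * π * a ^ 2 * b ^ 2 / a ^ 3 + c2 * π * a ^ 2 * b ^ 2 / a := by
  simp [ellipseE, sqrt_sq ha]

theorem ellipseE_pi_div_four (a b c1 c2 : ℝ) :
    ellipseE a b c1 c2 (π / 4) =
      -1 + c1 * π * a ^ 2 * b ^ 2 / √((a ^ 2 + b ^ 2) / 2) ^ 3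
        + c2 * π * a ^ 2 * b ^ 2 / (2 * √((a ^ 2 + b ^ 2) / 2)) := by
  have hsq : sin (π / 4) ^ 2 = 1 / 2 := by
    rw [sin_pi_div_four, div_pow, sq_sqrt zero_le_two]; norm_num
  have hcq : cos (π / 4) ^ 2 = 1 / 2 := by
    rw [cos_pi_div_four, div_pow, sq_sqrt zero_le_two]; norm_num
  rw [ellipseE, hsq, hcq]
  ring_nf

theorem ellipseE_self {r : ℝ} (hr : 0 ≤ r) (c1 c2 φ : ℝ) :
    ellipseE r r c1 c2 φ = -1 + c1 * π * r + c2 * π * r ^ 3 * sin φ ^ 2 := by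
  rw [ellipseE, ← mul_add, sin_sq_add_cos_sq, mul_one, sqrt_sq hr]
  rcases hr.eq_or_lt with rfl | hr
  · simp
  · field_simp

theorem quadratic_mean_cube_gt {a b s : ℝ} (hb : 0 < b) (hba : b < a) (hs0 : 0 ≤ s)
    (hs : s ^ 2 = (a ^ 2 + b ^ 2) / 2) :
    2 * a ^ 2 * b ^ 3 + (a ^ 3 - b ^ 3) * s ^ 2 < 2 * a ^ 2 * s ^ 3 := by
  have hmean : a + b ≤ 2 * s := by nlinarith [sq_nonneg (a - b), sq_nonneg (2 * s - (a + b))]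
  have hs3 : s ^ 3 = s * ((a ^ 2 + b ^ 2) / 2) := by rw [pow_succ', ← hs]
  rw [hs3, hs]
  nlinarith [mul_le_mul_of_nonneg_left hmean (by positivity : (0:ℝ) ≤ a ^ 2 * (a ^ 2 + b ^ 2)),
    mul_pos hb (pow_pos (by nlinarith : (0:ℝ) < a ^ 2 - b ^ 2) 2)]

theorem not_steady_at_three_points {a b K L : ℝ} (hb : 0 < b) (hba : b < a)
    (h0 : -1 + K / b ^ 3 = 0) (h2 : -1 + K / a ^ 3 + L / a = 0)
    (h4 : -1 + K / √((a ^ 2 + b ^ 2) / 2) ^ 3 + L / (2 * √((a ^ 2 + b ^ 2) / 2)) = 0) :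
    False := by
  have ha : 0 < a := hb.trans hba
  have hs : 0 < √((a ^ 2 + b ^ 2) / 2) := sqrt_pos.mpr (by positivity)
  have hK : K = b ^ 3 := by field_simp at h0; linarith
  have hL : L = (a ^ 3 - b ^ 3) / a ^ 2 := by
    rw [hK] at h2; field_simp at h2 ⊢; linarith
  rw [hK, hL] at h4
  have := quadratic_mean_cube_gt hb hba hs.le (sq_sqrt (by positivity))
  field_simp at h4
  linarith

theorem ellipseE_self_eq_zero_iff {r : ℝ} (hr : 0 < r) (c1 c2 : ℝ) :
    (∀ φ ∈ Icc (0 : ℝ) (π / 2), ellipseE r r c1 c2 φ = 0) ↔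
      c2 = 0 ∧ c1 = r / (r ^ 2 * π) := by
  simp only [ellipseE_self hr.le]
  constructor
  · intro h
    have h0 := h 0 ⟨le_rfl, by positivity⟩
    have h2 := h (π / 2) ⟨by positivity, le_rfl⟩
    simp only [sin_zero, sin_pi_div_two] at h0 h2
    refine ⟨?_, ?_⟩
    · have : c2 * (π * r ^ 3) = 0 := by linear_combination h2 - h0
      exact (mul_eq_zero.mp this).resolve_right (by positivity)
    · rw [eq_div_iff (by positivity)]
      linear_combination r * h0
  · rintro ⟨rfl, rfl⟩ φ -
    field_simp
    ring

/-- a genuine ellipse (`a > b > 0`) is never a steady-state shape: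
no constants `c₁, c₂` make the steady-state equation hold all along it. Among
ellipses only circles (`a = b`) can be steady states, and a circle of radius `r`
satisfies the equation exactly when `c₂ = 0` and `c₁ = r/(r²π) = 1/(rπ)`. -/
theorem ellipse_not_steady_state
    (a b : ℝ) (hba : b < a) (hb : 0 < b) :
    (¬ ∃ c1 c2 : ℝ, ∀ φ ∈ Set.Icc (0:ℝ) (Real.pi / 2), ellipseE a b c1 c2 φ = 0) ∧
    (∀ r : ℝ, 0 < r → ∀ c1 c2 : ℝ,
      ((∀ φ ∈ Set.Icc (0:ℝ) (Real.pi / 2), ellipseE r r c1 c2 φ = 0) ↔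
        (c2 = 0 ∧ c1 = r / (r ^ 2 * Real.pi)))) := by
  refine ⟨?_, fun r hr => ellipseE_self_eq_zero_iff hr⟩
  rintro ⟨c1, c2, h⟩
  have h0 := h 0 ⟨le_rfl, by positivity⟩
  have h2 := h (π / 2) ⟨by positivity, le_rfl⟩
  have h4 := h (π / 4) ⟨by positivity, by linarith [pi_pos]⟩
  rw [ellipseE_zero _ _ _ hb.le] at h0
  rw [ellipseE_pi_div_two _ _ _ (hb.trans hba).le] at h2
  rw [ellipseE_pi_div_four] at h4
  exact not_steady_at_three_points hb hba h0 h2 h4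
end
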